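/- Consider the ODE system s_i'(t) = −(1/y_i) F(s(t)) x(t) for i = 1,…,n and x'(t) = (−D + F(s(t))) x(t). For every solution (s(t), x(t)) with initial condition in the open positive cone ℝ₊^{n+1}, the biomass x(t) tends to 0 as t → ∞. -/

import Mathlib

open Filter Set Topology

noncomputable section

/-- Hypotheses on the uptake function `F`: Lipschitz on the closed positive cone,
vanishing when some nutrient is exhausted, positive on the open positive cone, and
strictly increasing in each argument on the positive cone. -/
def FHyp {n : ℕ} (F : (Fin n → ℝ) → ℝ) : Prop :=
  (∃ K : NNReal, LipschitzOnWith K F {s : Fin n → ℝ | ∀ i, 0 ≤ s i}) ∧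
  (∀ s : Fin n → ℝ, (∀ i, 0 ≤ s i) → (∃ i, s i = 0) → F s = 0) ∧
  (∀ s : Fin n → ℝ, (∀ i, 0 < s i) → 0 < F s) ∧
  (∀ s : Fin n → ℝ, (∀ i, 0 < s i) → ∀ i : Fin n, ∀ ε : ℝ, 0 < ε →
    F s < F (Function.update s i (s i + ε)))

/-- The component Lyapunov-like function `V_i(s) = y₁(s₁ⁱⁿ - s₁) - y_i(s_iⁱⁿ - s_i)`. -/
def Vfun {n : ℕ} [NeZero n] (y sIn : Fin n → ℝ) (i : Fin n) (s : Fin n → ℝ) : ℝ :=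
  y 0 * (sIn 0 - s 0) - y i * (sIn i - s i)

/-- `V̄_i = y₁(s₁ⁱⁿ - s̄₁) - y_i s_iⁱⁿ`. -/
def Vbar {n : ℕ} [NeZero n] (y sIn : Fin n → ℝ) (sbar1 : ℝ) (i : Fin n) : ℝ :=
  y 0 * (sIn 0 - sbar1) - y i * sIn i

/-- `Ω₀ = {s ∈ ℝⁿ₊ : s₁ ≥ s̄₁, V_i(s) < V̄_i for at least one i = 2,…,n}`. -/
def Omega0 {n : ℕ} [NeZero n] (y sIn : Fin n → ℝ) (sbar1 : ℝ) : Set (Fin n → ℝ) :=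
  {s | (∀ i, 0 < s i) ∧ sbar1 ≤ s 0 ∧ ∃ i, i ≠ 0 ∧ Vfun y sIn i s < Vbar y sIn sbar1 i}

/-- `Ω₁ = {s ∈ ℝⁿ₊ : s₁ ≥ s̄₁, V_i(s) > V̄_i for all i = 2,…,n}`. -/
def Omega1 {n : ℕ} [NeZero n] (y sIn : Fin n → ℝ) (sbar1 : ℝ) : Set (Fin n → ℝ) :=
  {s | (∀ i, 0 < s i) ∧ sbar1 ≤ s 0 ∧ ∀ i, i ≠ 0 → Vbar y sIn sbar1 i < Vfun y sIn i s}

/-- `φ_ν(s⁰) = s⁰ - ν y₁ (s₁⁰ - s̄₁) Y`, with `Y = (1/y₁, …, 1/yₙ)`. -/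
def phiNu {n : ℕ} [NeZero n] (y : Fin n → ℝ) (sbar1 ν : ℝ) (s0 : Fin n → ℝ) : Fin n → ℝ :=
  fun i => s0 i - ν * (y 0 * (s0 0 - sbar1)) * (1 / y i)

/-- `I(s⁰) = y₁ (s₁⁰ - s̄₁) ∫₀¹ (1 - D / F(φ_ν(s⁰))) dν`, the net biomass change over one cycle. -/
def Ifun {n : ℕ} [NeZero n] (F : (Fin n → ℝ) → ℝ) (D : ℝ) (y : Fin n → ℝ)
    (sbar1 : ℝ) (s0 : Fin n → ℝ) : ℝ :=
  y 0 * (s0 0 - sbar1) * ∫ ν in (0:ℝ)..1, (1 - D / F (phiNu y sbar1 ν s0))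

/-- `ŝ⁺(r) = sⁱⁿ - (1 - r) y₁ (s₁ⁱⁿ - s̄₁) Y`. -/
def shatP {n : ℕ} [NeZero n] (y sIn : Fin n → ℝ) (sbar1 r : ℝ) : Fin n → ℝ :=
  fun i => sIn i - (1 - r) * (y 0 * (sIn 0 - sbar1)) * (1 / y i)

/-- `μ(r) = y₁ (s̄₁⁺ - s̄₁) ∫₀¹ (1 - D / F(φ_ν(ŝ⁺(r)))) dν`, where `s̄₁⁺ = r s₁ⁱⁿ + (1-r) s̄₁`. -/
def muFun {n : ℕ} [NeZero n] (F : (Fin n → ℝ) → ℝ) (D : ℝ) (y sIn : Fin n → ℝ)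
    (sbar1 r : ℝ) : ℝ :=
  y 0 * ((r * sIn 0 + (1 - r) * sbar1) - sbar1) *
    ∫ ν in (0:ℝ)..1, (1 - D / F (phiNu y sbar1 ν (shatP y sIn sbar1 r)))

/-- `Γ_ρ⁺ = {s ∈ ℝⁿ₊ : s₁ = s̄₁⁺, V_i(s) > -ρ for all i = 2,…,n}`. -/
def GammaRho {n : ℕ} [NeZero n] (y sIn : Fin n → ℝ) (sbar1 r ρ : ℝ) : Set (Fin n → ℝ) :=
  {s | (∀ i, 0 < s i) ∧ s 0 = r * sIn 0 + (1 - r) * sbar1 ∧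
    ∀ i, i ≠ 0 → -ρ < Vfun y sIn i s}

/-- `Ω^ρ = {s ∈ Ω₁ : V_i(s) > -ρ for all i = 2,…,n}`. -/
def OmegaRho {n : ℕ} [NeZero n] (y sIn : Fin n → ℝ) (sbar1 ρ : ℝ) : Set (Fin n → ℝ) :=
  {s | s ∈ Omega1 y sIn sbar1 ∧ ∀ i, i ≠ 0 → -ρ < Vfun y sIn i s}

/-- The cycle map `s ↦ g(φ₁(s)) = r sⁱⁿ + (1 - r) φ₁(s)`. -/
def cycMap {n : ℕ} [NeZero n] (y sIn : Fin n → ℝ) (sbar1 r : ℝ)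
    (s : Fin n → ℝ) : Fin n → ℝ :=
  fun i => r * sIn i + (1 - r) * phiNu y sbar1 1 s i

/-- A (right-continuous) solution of the impulsive self-cycling fermentation model
`eq:model`: between impulse times the ODEs hold, impulse times are exactly the times
where the left limit of `s₁` equals the threshold `s̄₁`, and at an impulse time the
state jumps according to the decanting/refilling map. -/
structure SCFSol (n : ℕ) [NeZero n] (F : (Fin n → ℝ) → ℝ) (D : ℝ) (y : Fin n → ℝ)
    (r : ℝ) (sIn : Fin n → ℝ) (sbar1 : ℝ) where
  /-- nutrient concentrations -/
  s : ℝ → Fin n → ℝ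
  /-- biomass concentration -/
  x : ℝ → ℝ
  /-- the set of impulse times -/
  T : Set ℝ
  /-- left limits of `s` (meaningful at impulse times) -/
  sLim : ℝ → Fin n → ℝ
  /-- left limit of `x` (meaningful at impulse times) -/
  xLim : ℝ → ℝ
  T_pos : ∀ t ∈ T, 0 < t
  init : sbar1 < s 0 0
  ode_s : ∀ t : ℝ, 0 ≤ t → t ∉ T → ∀ i,
    HasDerivAt (fun τ => s τ i) (-(1 / y i) * F (s t) * x t) t
  ode_x : ∀ t : ℝ, 0 ≤ t → t ∉ T →
    HasDerivAt x ((-D + F (s t)) * x t) t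
  left_s : ∀ t ∈ T, ∀ i,
    Filter.Tendsto (fun τ => s τ i) (nhdsWithin t (Set.Iio t)) (nhds (sLim t i))
  left_x : ∀ t ∈ T, Filter.Tendsto x (nhdsWithin t (Set.Iio t)) (nhds (xLim t))
  hit : ∀ t ∈ T, sLim t 0 = sbar1
  exact_hit : ∀ t : ℝ, 0 < t → t ∉ T → s t 0 ≠ sbar1
  jump_s : ∀ t ∈ T, ∀ i, s t i = r * sIn i + (1 - r) * sLim t i
  jump_x : ∀ t ∈ T, x t = (1 - r) * xLim t

/-- Convergence of a solution to the unique periodic orbit: there are infinitely many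
impulses and, along the (increasing) enumeration of the impulse times, the post-impulse
nutrient states converge to `ŝ⁺(r)`, the post-impulse biomass converges to
`((1-r)/r) μ(r)`, and the pre-impulse biomass converges to `(1/r) μ(r)`. -/
def ConvergesToPeriodic {n : ℕ} [NeZero n] {F : (Fin n → ℝ) → ℝ} {D : ℝ}
    {y : Fin n → ℝ} {r : ℝ} {sIn : Fin n → ℝ} {sbar1 : ℝ}
    (sol : SCFSol n F D y r sIn sbar1) : Prop :=
  sol.T.Infinite ∧
  ∀ tk : ℕ → ℝ, StrictMono tk → Set.range tk = sol.T →
    (∀ i, Filter.Tendsto (fun k => sol.s (tk k) i) Filter.atTop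
      (nhds (shatP y sIn sbar1 r i))) ∧
    Filter.Tendsto (fun k => sol.x (tk k)) Filter.atTop
      (nhds ((1 - r) / r * muFun F D y sIn sbar1 r)) ∧
    Filter.Tendsto (fun k => sol.xLim (tk k)) Filter.atTop
      (nhds (1 / r * muFun F D y sIn sbar1 r))

/-!
The quantity `y i * s i + x` has derivative `-D x`, so it decreases while `x ≥ 0`; this bounds
`x`, and then the Lipschitz bound `F s ≤ K s i` (valid because `F` vanishes on the boundary of the
cone) turns the equations into linear lower bounds `s i' ≥ -c s i` and `x' ≥ -D x`. Grönwall keeps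
the state in the open cone for all time. There `y₀ s₀ + x` and `s₀` decrease and are bounded
below, so `x` converges, and its limit must be `0`: otherwise `y₀ s₀ + x`, whose derivative is
`-D x`, would decrease to `-∞`.
-/

open Real

theorem antitoneOn_of_hasDerivAt_nonpos {J : Set ℝ} (hJ : Convex ℝ J) {f f' : ℝ → ℝ}
    (hf : ∀ t ∈ J, HasDerivAt f (f' t) t) (hf₀ : ∀ t ∈ interior J, f' t ≤ 0) :
    AntitoneOn f J :=
  antitoneOn_of_hasDerivWithinAt_nonpos hJ (HasDerivAt.continuousOn hf)
    (fun t ht => (hf t (interior_subset ht)).hasDerivWithinAt) hf₀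

theorem mul_exp_le_of_neg_mul_le_deriv {f f' : ℝ → ℝ} {a b c : ℝ} (hab : a ≤ b)
    (hf : ∀ t ∈ Icc a b, HasDerivAt f (f' t) t) (hbound : ∀ t ∈ Ico a b, -c * f t ≤ f' t) :
    f a * exp (-c * (b - a)) ≤ f b := by
  have h := le_gronwallBound_of_liminf_deriv_right_le (f := fun t => -f t)
    (f' := fun t => -f' t) (δ := -f a) (K := -c) (ε := 0)
    (HasDerivAt.continuousOn fun t ht => (hf t ht).neg)
    (fun t ht _ hr => (hf t (Ico_subset_Icc_self ht)).neg.hasDerivWithinAt.liminf_right_slope_le hr)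
    le_rfl (fun t ht => by linarith [hbound t ht]) b ⟨hab, le_rfl⟩
  rw [gronwallBound_ε0] at h
  linarith

theorem AntitoneOn.exists_tendsto_atTop {α : Type*} [LinearOrder α] {f : α → ℝ} {a : α}
    (hf : AntitoneOn f (Ici a)) (hB : BddBelow (f '' Ici a)) :
    ∃ l, Tendsto f atTop (𝓝 l) := by
  obtain ⟨B, hB⟩ := hB
  have hg : Antitone fun t => f (max a t) := fun u v huv =>
    hf (le_max_left a u) (le_max_left a v) (max_le_max le_rfl huv)
  refine ⟨_, (tendsto_atTop_ciInf hg ⟨B, ?_⟩).congr' ?_⟩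
  · rintro _ ⟨t, rfl⟩
    exact hB (mem_image_of_mem f (le_max_left a t))
  · filter_upwards [eventually_ge_atTop a] with t ht
    rw [max_eq_right ht]

theorem nonneg_of_tendsto_deriv_of_bddBelow {f f' : ℝ → ℝ} {a l : ℝ}
    (hf : ∀ t ∈ Ici a, HasDerivAt f (f' t) t) (hf' : Tendsto f' atTop (𝓝 l))
    (hB : BddBelow (f '' Ici a)) : 0 ≤ l := by
  obtain ⟨B, hB⟩ := hB
  by_contra! hl
  obtain ⟨t₀, ht₀⟩ := eventually_atTop.1
    ((hf'.eventually (eventually_lt_nhds (by linarith : l < l / 2))).and (eventually_ge_atTop a))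
  have hg : AntitoneOn (fun t => f t - l / 2 * t) (Ici t₀) :=
    antitoneOn_of_hasDerivAt_nonpos (convex_Ici t₀)
      (fun t ht => (hf t ((ht₀ t₀ le_rfl).2.trans ht)).sub ((hasDerivAt_id t).const_mul _))
      (fun t ht => by
        rw [interior_Ici] at ht
        linarith [(ht₀ t (le_of_lt ht)).1])
  have hlin : Tendsto (fun t => (f t₀ - l / 2 * t₀) + l / 2 * t) atTop atBot :=
    tendsto_atBot_add_const_left _ _ (tendsto_id.const_mul_atTop_of_neg (by linarith))
  have hbot : Tendsto f atTop atBot := by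
    refine tendsto_atBot_mono' _ ?_ hlin
    filter_upwards [eventually_ge_atTop t₀] with t ht
    linarith [hg self_mem_Ici ht ht]
  obtain ⟨t, ht, hat⟩ :=
    ((hbot.eventually (eventually_lt_atBot B)).and (eventually_ge_atTop a)).exists
  linarith [hB (mem_image_of_mem f hat)]

theorem forall_Ici_mem_of_forall_Ico_mem {α E : Type*} [ConditionallyCompleteLinearOrder α]
    [TopologicalSpace α] [OrderTopology α] [TopologicalSpace E] {f : α → E} {U : Set E} {a : α}
    (hf : ContinuousOn f (Ici a)) (hU : IsOpen U) (ha : f a ∈ U)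
    (hstep : ∀ b, a < b → (∀ t ∈ Ico a b, f t ∈ U) → f b ∈ U) :
    ∀ t ∈ Ici a, f t ∈ U := by
  by_contra! ⟨t, hat, ht⟩
  set S := Ici a ∩ f ⁻¹' Uᶜ
  have hSbdd : BddBelow S := ⟨a, fun _ h => h.1⟩
  obtain ⟨hab, hb⟩ : sInf S ∈ S :=
    (hf.preimage_isClosed_of_isClosed isClosed_Ici hU.isClosed_compl).csInf_mem ⟨t, hat, ht⟩ hSbdd
  refine hb (hstep _ (lt_of_le_of_ne hab fun h => hb (h ▸ ha)) fun u hu => ?_)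
  by_contra hu'
  exact (csInf_le hSbdd ⟨hu.1, hu'⟩).not_gt hu.2

theorem LipschitzOnWith.le_mul_of_eq_zero_on_boundary {ι : Type*} [Fintype ι]
    {F : (ι → ℝ) → ℝ} {K : NNReal} (hK : LipschitzOnWith K F {s | ∀ i, 0 ≤ s i})
    (hzero : ∀ s : ι → ℝ, (∀ i, 0 ≤ s i) → (∃ i, s i = 0) → F s = 0)
    {s : ι → ℝ} (hs : ∀ i, 0 ≤ s i) (i : ι) : F s ≤ K * s i := by
  classical
  set u := Function.update s i 0
  have hu : ∀ j, 0 ≤ u j := fun j => by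
    rcases eq_or_ne j i with rfl | hj <;> simp [u, *]
  have hdist : dist s u ≤ s i := (dist_pi_le_iff (hs i)).2 fun j => by
    rcases eq_or_ne j i with rfl | hj <;> simp [u, *, abs_of_nonneg]
  calc F s = F s - F u := by rw [hzero u hu ⟨i, by simp [u]⟩, sub_zero]
    _ ≤ dist (F s) (F u) := (le_abs_self _).trans (Real.dist_eq _ _).ge
    _ ≤ K * dist s u := hK.dist_le_mul s hs u hu
    _ ≤ K * s i := by gcongr

section ODE

variable {n : ℕ} {F : (Fin n → ℝ) → ℝ} {D : ℝ} {y : Fin n → ℝ} {s : ℝ → Fin n → ℝ}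
  {x : ℝ → ℝ}
  (hode_s : ∀ t : ℝ, 0 ≤ t → ∀ i,
    HasDerivAt (fun τ => s τ i) (-(1 / y i) * F (s t) * x t) t)
  (hode_x : ∀ t : ℝ, 0 ≤ t → HasDerivAt x ((-D + F (s t)) * x t) t)
include hode_s hode_x

theorem hasDerivAt_yield_mul_add (hy : ∀ i, 0 < y i) (i : Fin n) {t : ℝ} (ht : 0 ≤ t) :
    HasDerivAt (fun τ => y i * s τ i + x τ) (-D * x t) t := by
  refine (((hode_s t ht i).const_mul (y i)).add (hode_x t ht)).congr_deriv ?_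
  linear_combination -(F (s t) * x t) * mul_one_div_cancel (hy i).ne'

theorem antitoneOn_yield_mul_add (hD : 0 ≤ D) (hy : ∀ i, 0 < y i) (i : Fin n) {J : Set ℝ}
    (hJ : Convex ℝ J) (hJ₀ : J ⊆ Ici 0) (hx : ∀ t ∈ interior J, 0 ≤ x t) :
    AntitoneOn (fun τ => y i * s τ i + x τ) J :=
  antitoneOn_of_hasDerivAt_nonpos hJ
    (fun t ht => hasDerivAt_yield_mul_add hode_s hode_x hy i (hJ₀ ht))
    (fun t ht => by nlinarith [hx t ht])

theorem state_pos_of_pos_on_Ico (hF : FHyp F) (hD : 0 ≤ D) (hy : ∀ i, 0 < y i)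
    (hinit : (∀ i, 0 < s 0 i) ∧ 0 < x 0) {T : ℝ} (hT : 0 < T)
    (hpos : ∀ t ∈ Ico 0 T, (∀ i, 0 < s t i) ∧ 0 < x t) :
    (∀ i, 0 < s T i) ∧ 0 < x T := by
  obtain ⟨⟨K, hK⟩, hzero, hFpos, -⟩ := hF
  have hx_le (i) : ∀ t ∈ Ico 0 T, x t ≤ y i * s 0 i + x 0 := fun t ht => by
    have := antitoneOn_yield_mul_add hode_s hode_x hD hy i (convex_Icc 0 T) (fun _ h => h.1)
      (fun u hu => by rw [interior_Icc] at hu; exact (hpos u ⟨hu.1.le, hu.2⟩).2.le)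
      ⟨le_rfl, hT.le⟩ (Ico_subset_Icc_self ht) ht.1
    nlinarith [mul_pos (hy i) ((hpos t ht).1 i)]
  refine ⟨fun i => ?_, ?_⟩
  · set c := K * (y i * s 0 i + x 0) / y i
    refine lt_of_lt_of_le (by have := hinit.1 i; positivity)
      (mul_exp_le_of_neg_mul_le_deriv (c := c) hT.le (fun t ht => hode_s t ht.1 i) fun t ht => ?_)
    obtain ⟨hst, hxt⟩ := hpos t ht
    have hF_le := hK.le_mul_of_eq_zero_on_boundary hzero (fun j => (hst j).le) i
    have hFx : F (s t) * x t ≤ K * s t i * (y i * s 0 i + x 0) :=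
      mul_le_mul hF_le (hx_le i t ht) hxt.le (by have := hst i; positivity)
    have := mul_le_mul_of_nonneg_left hFx (one_div_nonneg.2 (hy i).le)
    calc -c * s t i = -(1 / y i * (K * s t i * (y i * s 0 i + x 0))) := by simp only [c]; ring
      _ ≤ -(1 / y i * (F (s t) * x t)) := neg_le_neg this
      _ = -(1 / y i) * F (s t) * x t := by ring
  · refine lt_of_lt_of_le (by have := hinit.2; positivity)
      (mul_exp_le_of_neg_mul_le_deriv (c := D) hT.le (fun t ht => hode_x t ht.1) fun t ht => ?_)
    obtain ⟨hst, hxt⟩ := hpos t ht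
    nlinarith [hFpos _ hst]

theorem state_pos (hF : FHyp F) (hD : 0 ≤ D) (hy : ∀ i, 0 < y i)
    (hinit : (∀ i, 0 < s 0 i) ∧ 0 < x 0) :
    ∀ t ∈ Ici (0 : ℝ), (∀ i, 0 < s t i) ∧ 0 < x t := by
  have hU : IsOpen {p : (Fin n → ℝ) × ℝ | (∀ i, 0 < p.1 i) ∧ 0 < p.2} := by
    simp only [ofPred_and, ofPred_forall]
    exact (isOpen_iInter_of_finite fun i => isOpen_lt continuous_const (by fun_prop)).inter
      (isOpen_lt continuous_const continuous_snd)
  refine forall_Ici_mem_of_forall_Ico_mem (f := fun t => (s t, x t)) (fun t ht => ?_) hU hinit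
    fun T hT hpos => state_pos_of_pos_on_Ico hode_s hode_x hF hD hy hinit hT hpos
  exact ((continuousAt_pi.2 fun i => (hode_s t ht i).continuousAt).prodMk
    (hode_x t ht).continuousAt).continuousWithinAt

end ODE

/-- Lemma 2.1, second part: along every solution of the limiting ODE
system with initial condition in the open positive cone, the biomass tends to `0`. -/
theorem scf_ode_biomass_tendsto_zero {n : ℕ} [NeZero n] (F : (Fin n → ℝ) → ℝ) (hF : FHyp F)
    (D : ℝ) (hD : 0 < D) (y : Fin n → ℝ) (hy : ∀ i, 0 < y i)
    (s : ℝ → Fin n → ℝ) (x : ℝ → ℝ)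
    (hode_s : ∀ t : ℝ, 0 ≤ t → ∀ i,
      HasDerivAt (fun τ => s τ i) (-(1 / y i) * F (s t) * x t) t)
    (hode_x : ∀ t : ℝ, 0 ≤ t → HasDerivAt x ((-D + F (s t)) * x t) t)
    (hinit : (∀ i, 0 < s 0 i) ∧ 0 < x 0) :
    Filter.Tendsto x Filter.atTop (nhds 0) := by
  have hpos := state_pos hode_s hode_x hF hD.le hy hinit
  have hmass_bdd : BddBelow ((fun t => y 0 * s t 0 + x t) '' Ici 0) :=
    ⟨0, forall_mem_image.2 fun t ht => by
      have := mul_pos (hy 0) ((hpos t ht).1 0); linarith [(hpos t ht).2]⟩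
  obtain ⟨A, hA⟩ := (antitoneOn_yield_mul_add hode_s hode_x hD.le hy 0 (convex_Ici 0) subset_rfl
    fun t ht => (hpos t (interior_subset ht)).2.le).exists_tendsto_atTop hmass_bdd
  have hs₀ : AntitoneOn (fun t => s t 0) (Ici 0) :=
    antitoneOn_of_hasDerivAt_nonpos (convex_Ici 0) (fun t ht => hode_s t ht 0) fun t ht => by
      obtain ⟨hst, hxt⟩ := hpos t (interior_subset ht)
      have := mul_pos (mul_pos (one_div_pos.2 (hy 0)) (hF.2.2.1 _ hst)) hxt
      linarith
  obtain ⟨L, hL⟩ :=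
    hs₀.exists_tendsto_atTop ⟨0, forall_mem_image.2 fun t ht => ((hpos t ht).1 0).le⟩
  have hx : Tendsto x atTop (𝓝 (A - y 0 * L)) := by simpa using hA.sub (hL.const_mul (y 0))
  have hlim_nonneg : 0 ≤ A - y 0 * L :=
    ge_of_tendsto hx (eventually_atTop.2 ⟨0, fun t ht => (hpos t ht).2.le⟩)
  have hlim_nonpos : A - y 0 * L ≤ 0 := by
    have := nonneg_of_tendsto_deriv_of_bddBelow
      (fun t ht => hasDerivAt_yield_mul_add hode_s hode_x hy 0 ht) (hx.const_mul (-D)) hmass_bdd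
    nlinarith
  rwa [le_antisymm hlim_nonpos hlim_nonneg] at hx

end
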